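/- For any monoid M and any trace monoid M(E,I), every monoid homomorphism f : M(E,I) → M factors uniquely as f = ε_M ∘ f̄ where f̄ : M(E,I) → M(M\{1}, I_M) is a basic homomorphism, I_M = {(μ₁,μ₂) : μ₁ ≠ μ₂ ≠ 1 ≠ μ₁, μ₁μ₂ = μ₂μ₁}, and ε_M is the homomorphism sending each generator μ ∈ M\{1} to μ. -/

import Mathlib

open CategoryTheory

/-- The elementary commutation relation on words generated by an independence relation. -/
def traceRel (E : Type) (I : Set (E × E)) : FreeMonoid E → FreeMonoid E → Prop :=
  fun x y => ∃ a b : E, (a, b) ∈ I ∧ x = FreeMonoid.of a * FreeMonoid.of b ∧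
    y = FreeMonoid.of b * FreeMonoid.of a

/-- The congruence on the free monoid generated by commutation of independent pairs. -/
def traceCon (E : Type) (I : Set (E × E)) : Con (FreeMonoid E) := conGen (traceRel E I)

/-- The trace monoid `M(E,I)`. -/
abbrev TraceMonoid (E : Type) (I : Set (E × E)) : Type := (traceCon E I).Quotient

/-- The canonical projection from words to traces. -/
def trcMk {E : Type} {I : Set (E × E)} : FreeMonoid E →* TraceMonoid E I :=
  (traceCon E I).mk'

/-- The generator of the trace monoid corresponding to an event `e`. -/
def trc {E : Type} {I : Set (E × E)} (e : E) : TraceMonoid E I :=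
  trcMk (FreeMonoid.of e)

/-- `I` is an independence relation: irreflexive and symmetric. -/
structure IsIndep {E : Type} (I : Set (E × E)) : Prop where
  irrefl : ∀ a : E, (a, a) ∉ I
  symm : ∀ a b : E, (a, b) ∈ I → (b, a) ∈ I

/-- A homomorphism of trace monoids is basic if it sends generators to generators or to `1`. -/
def IsBasic {E E' : Type} {I : Set (E × E)} {I' : Set (E' × E')}
    (f : TraceMonoid E I →* TraceMonoid E' I') : Prop :=
  ∀ e : E, (∃ e' : E', f (trc e) = trc e') ∨ f (trc e) = 1

/-- A basic homomorphism preserves independence. -/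
def IsIndepPres {E E' : Type} {I : Set (E × E)} {I' : Set (E' × E')}
    (f : TraceMonoid E I →* TraceMonoid E' I') : Prop :=
  ∀ a b : E, (a, b) ∈ I → f (trc a) ≠ f (trc b) ∨ (f (trc a) = 1 ∧ f (trc b) = 1)

/-- The monoid homomorphism out of a trace monoid induced by a map on generators whose
images commute at independent pairs. -/
def liftHom {E : Type} {I : Set (E × E)} {N : Type*} [Monoid N] (φ : E → N)
    (hφ : ∀ a b : E, (a, b) ∈ I → φ a * φ b = φ b * φ a) : TraceMonoid E I →* N :=
  (traceCon E I).lift (FreeMonoid.lift φ) (by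
    rw [traceCon, Con.conGen_le]
    rintro x y ⟨a, b, hab, rfl, rfl⟩
    rw [Con.ker_rel]
    simp only [map_mul, FreeMonoid.lift_eval_of]
    exact hφ a b hab)

@[simp] theorem liftHom_trc {E : Type} {I : Set (E × E)} {N : Type*} [Monoid N] (φ : E → N)
    (hφ : ∀ a b : E, (a, b) ∈ I → φ a * φ b = φ b * φ a) (e : E) :
    liftHom φ hφ (trc (I := I) e) = φ e := by
  show (traceCon E I).lift _ _ ((traceCon E I).mk' (FreeMonoid.of e)) = φ e
  rw [Con.lift_mk']
  simp

theorem trc_comm {E : Type} {I : Set (E × E)} {a b : E} (h : (a, b) ∈ I) :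
    (trc a : TraceMonoid E I) * trc b = trc b * trc a := by
  show trcMk (FreeMonoid.of a) * trcMk (FreeMonoid.of b) =
    trcMk (FreeMonoid.of b) * trcMk (FreeMonoid.of a)
  rw [← map_mul, ← map_mul]
  exact (Con.eq _).2 (ConGen.Rel.of _ _ ⟨a, b, h, rfl, rfl⟩)

theorem isBasic_id {E : Type} {I : Set (E × E)} :
    IsBasic (MonoidHom.id (TraceMonoid E I)) := fun e => Or.inl ⟨e, rfl⟩

theorem isBasic_comp {E₁ E₂ E₃ : Type} {I₁ : Set (E₁ × E₁)} {I₂ : Set (E₂ × E₂)}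
    {I₃ : Set (E₃ × E₃)} {f : TraceMonoid E₁ I₁ →* TraceMonoid E₂ I₂}
    {g : TraceMonoid E₂ I₂ →* TraceMonoid E₃ I₃} (hf : IsBasic f) (hg : IsBasic g) :
    IsBasic (g.comp f) := by
  intro e
  rcases hf e with ⟨e', he⟩ | he
  · rcases hg e' with ⟨e'', he''⟩ | he''
    · exact Or.inl ⟨e'', by simp [MonoidHom.comp_apply, he, he'']⟩
    · exact Or.inr (by simp [MonoidHom.comp_apply, he, he''])
  · exact Or.inr (by simp [MonoidHom.comp_apply, he])

/-- The independence relation `I_M` on `M \ {1}`: distinct commuting non-identity pairs. -/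
def IMon (M : Type) [Monoid M] : Set ({m : M // m ≠ 1} × {m : M // m ≠ 1}) :=
  {p | p.1 ≠ p.2 ∧ (p.1 : M) * (p.2 : M) = (p.2 : M) * (p.1 : M)}

/-- The homomorphism `ε_M : M(M \ {1}, I_M) → M` sending each generator `μ` to `μ`. -/
def epsMon (M : Type) [Monoid M] : TraceMonoid {m : M // m ≠ 1} (IMon M) →* M :=
  liftHom (fun m => m.val) (fun _ _ h => h.2)

/-! A trace in `M(M \ {1}, I_M)` that is a generator or `1` is determined by its image under
`ε_M`: the inverse sends `μ ≠ 1` to the generator `μ` and `1` to `1`. So a basic `f̄` with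
`ε_M ∘ f̄ = f` must send each generator `e` to this preimage of `f e`, and these preimages
define a homomorphism because images of independent generators commute in `M` and are then
either equal or `I_M`-independent. -/

theorem TraceMonoid.hom_ext {E : Type} {I : Set (E × E)} {N : Type*} [Monoid N]
    {g h : TraceMonoid E I →* N} (H : ∀ e : E, g (trc e) = h (trc e)) : g = h := by
  refine MonoidHom.ext fun x => ?_
  obtain ⟨w, rfl⟩ := Con.mk'_surjective x
  show g.comp trcMk w = h.comp trcMk w
  rw [FreeMonoid.hom_eq (f := g.comp trcMk) (g := h.comp trcMk) H]

section GenOrOne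

variable {M : Type} [Monoid M]

@[simp] theorem epsMon_trc (μ : {m : M // m ≠ 1}) : epsMon M (trc μ) = μ :=
  liftHom_trc _ _ μ

open Classical in
noncomputable def genOrOne (μ : M) : TraceMonoid {m : M // m ≠ 1} (IMon M) :=
  if h : μ = 1 then 1 else trc ⟨μ, h⟩

@[simp] theorem genOrOne_one : genOrOne (1 : M) = 1 := dif_pos rfl

theorem genOrOne_of_ne_one {μ : M} (h : μ ≠ 1) : genOrOne μ = trc ⟨μ, h⟩ := dif_neg h

@[simp] theorem epsMon_genOrOne (μ : M) : epsMon M (genOrOne μ) = μ := by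
  by_cases h : μ = 1
  · rw [h, genOrOne_one, map_one]
  · rw [genOrOne_of_ne_one h, epsMon_trc]

@[simp] theorem genOrOne_epsMon_trc (μ : {m : M // m ≠ 1}) :
    genOrOne (epsMon M (trc μ)) = trc μ := by
  rw [epsMon_trc, genOrOne_of_ne_one μ.2]

theorem Commute.genOrOne {μ ν : M} (h : Commute μ ν) :
    Commute (genOrOne μ) (genOrOne ν) := by
  by_cases hμ : μ = 1
  · rw [hμ, genOrOne_one]; exact Commute.one_left _
  by_cases hν : ν = 1
  · rw [hν, genOrOne_one]; exact Commute.one_right _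
  by_cases hμν : μ = ν
  · subst hμν; exact Commute.refl _
  rw [genOrOne_of_ne_one hμ, genOrOne_of_ne_one hν]
  exact trc_comm ⟨fun h' => hμν (congrArg Subtype.val h'), h⟩

theorem IsBasic.genOrOne_epsMon {E : Type} {I : Set (E × E)}
    {g : TraceMonoid E I →* TraceMonoid {m : M // m ≠ 1} (IMon M)} (hg : IsBasic g) (e : E) :
    genOrOne (epsMon M (g (trc e))) = g (trc e) := by
  rcases hg e with ⟨μ, hμ⟩ | h1
  · rw [hμ, genOrOne_epsMon_trc]
  · rw [h1, map_one, genOrOne_one]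

end GenOrOne

section BasicLift

variable {M : Type} [Monoid M] {E : Type} {I : Set (E × E)}

noncomputable def basicLift (f : TraceMonoid E I →* M) :
    TraceMonoid E I →* TraceMonoid {m : M // m ≠ 1} (IMon M) :=
  liftHom (fun e => genOrOne (f (trc e))) fun _ _ hab => (Commute.map (trc_comm hab) f).genOrOne

@[simp] theorem basicLift_trc (f : TraceMonoid E I →* M) (e : E) :
    basicLift f (trc e) = genOrOne (f (trc e)) :=
  liftHom_trc _ _ e

theorem isBasic_basicLift (f : TraceMonoid E I →* M) : IsBasic (basicLift f) := by
  intro e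
  rw [basicLift_trc]
  by_cases h : f (trc e) = 1
  · exact Or.inr (by rw [h, genOrOne_one])
  · exact Or.inl ⟨_, genOrOne_of_ne_one h⟩

theorem epsMon_comp_basicLift (f : TraceMonoid E I →* M) :
    (epsMon M).comp (basicLift f) = f :=
  TraceMonoid.hom_ext fun e => by simp

theorem eq_basicLift_of_isBasic {f : TraceMonoid E I →* M}
    {g : TraceMonoid E I →* TraceMonoid {m : M // m ≠ 1} (IMon M)} (hg : IsBasic g)
    (hgf : (epsMon M).comp g = f) : g = basicLift f :=
  TraceMonoid.hom_ext fun e => by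
    rw [basicLift_trc, ← hgf, MonoidHom.comp_apply, hg.genOrOne_epsMon]

end BasicLift

theorem factor_through_epsMon_general (M : Type) [Monoid M] (E : Type) (I : Set (E × E))
    (f : TraceMonoid E I →* M) :
    ∃! fbar : TraceMonoid E I →* TraceMonoid {m : M // m ≠ 1} (IMon M),
      IsBasic fbar ∧ (epsMon M).comp fbar = f :=
  ⟨basicLift f, ⟨isBasic_basicLift f, epsMon_comp_basicLift f⟩,
    fun _ ⟨hg, hgf⟩ => eq_basicLift_of_isBasic hg hgf⟩

/-- Every monoid homomorphism `f : M(E,I) → M` factors uniquely through `ε_M` by a basic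
homomorphism `f̄ : M(E,I) → M(M \ {1}, I_M)`. -/
theorem factor_through_epsMon (M : Type) [Monoid M] (E : Type) (I : Set (E × E))
    (hI : IsIndep I) (f : TraceMonoid E I →* M) :
    ∃! fbar : TraceMonoid E I →* TraceMonoid {m : M // m ≠ 1} (IMon M),
      IsBasic fbar ∧ (epsMon M).comp fbar = f :=
  factor_through_epsMon_general M E I f
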